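/- arXiv:2011.09995 — 2 statements merged into one kernel-verified Lean document; each statement's English description precedes it below -/
import Mathlib

section
/- Let a₁ = (α₁,a'₁),…,aₙ = (αₙ,a'ₙ) and c₁ = (γ₁,c'₁),…,cₙ = (γₙ,c'ₙ) be elements of the dual-number ring on ℂ × ℂ with the α_i pairwise distinct and the γ_i pairwise distinct. If for every 1 ≤ i ≤ n the lifted elementary symmetric expressions agree, ∑_{j₁<⋯<j_i} a_{j₁} ⊗ ⋯ ⊗ a_{j_i} = ∑_{j₁<⋯<j_i} c_{j₁} ⊗ ⋯ ⊗ c_{j_i}, then {a₁,…,aₙ} = {c₁,…,cₙ} as sets. -/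
open Finset Polynomial TrivSqZeroExt

lemma dn_prod_eq {ι : Type*} [DecidableEq ι] (s : Finset ι) (β b : ι → ℂ) :
    ∏ k ∈ s, (inl (β k) + inr (b k) : DualNumber ℂ)
      = inl (∏ k ∈ s, β k)
        + inr (∑ k ∈ s, (∏ l ∈ s.erase k, β l) * b k) := by
  induction s using Finset.induction with
  | empty => simp
  | @insert x s h ih =>
    rw [Finset.prod_insert h, ih, Finset.prod_insert h, Finset.sum_insert h,
      Finset.erase_insert h]
    have hsum : ∀ k ∈ s, (∏ l ∈ (insert x s).erase k, β l) * b k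
        = β x * ((∏ l ∈ s.erase k, β l) * b k) := by
      intro k hk
      rw [Finset.erase_insert_of_ne (by rintro rfl; exact h hk),
        Finset.prod_insert (fun hh => h (Finset.mem_of_mem_erase hh))]
      ring
    rw [Finset.sum_congr rfl hsum, ← Finset.mul_sum]
    simp only [add_mul, mul_add, inl_mul_inl, inl_mul_inr, inr_mul_inl, inr_mul_inr,
      smul_eq_mul, op_smul_eq_smul]
    rw [add_zero, add_assoc, ← inr_add]

lemma dn_range_subset {n : ℕ} (α a' γ c' : Fin n → ℂ) (hγ : Function.Injective γ)
    (a c : Fin n → DualNumber ℂ)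
    (ha : ∀ j, a j = inl (α j) + inr (a' j))
    (hc : ∀ j, c j = inl (γ j) + inr (c' j))
    (hP : ∏ j, (X - C (a j)) = ∏ j, (X - C (c j))) :
    Set.range a ⊆ Set.range c := by
  rintro _ ⟨j, rfl⟩
  have h1 : Polynomial.eval (a j) (∏ k, (X - C (a k))) = 0 := by
    rw [eval_prod]
    exact Finset.prod_eq_zero (mem_univ j) (by simp)
  have h0 : ∏ k, (a j - c k) = 0 := by
    rw [hP, eval_prod] at h1
    simpa using h1
  have h2 : ∏ k, (inl (α j - γ k) + inr (a' j - c' k) : DualNumber ℂ) = 0 := by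
    rw [← h0]
    refine Finset.prod_congr rfl fun k _ => ?_
    rw [ha, hc, inl_sub, inr_sub]
    abel
  rw [dn_prod_eq] at h2
  have hfst : ∏ k, (α j - γ k) = 0 := by
    simpa using congrArg TrivSqZeroExt.fst h2
  have hsnd : ∑ k, (∏ l ∈ Finset.univ.erase k, (α j - γ l)) * (a' j - c' k) = 0 := by
    simpa using congrArg TrivSqZeroExt.snd h2
  obtain ⟨k0, -, hk0⟩ := Finset.prod_eq_zero_iff.mp hfst
  have hαγ : α j = γ k0 := by linear_combination hk0
  have hprodne : ∏ l ∈ Finset.univ.erase k0, (α j - γ l) ≠ 0 := by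
    rw [Finset.prod_ne_zero_iff]
    intro l hl
    have : l ≠ k0 := (Finset.mem_erase.mp hl).1
    rw [hαγ, sub_ne_zero]
    exact fun h => this (hγ h.symm)
  have hsum : ∑ k, (∏ l ∈ Finset.univ.erase k, (α j - γ l)) * (a' j - c' k)
      = (∏ l ∈ Finset.univ.erase k0, (α j - γ l)) * (a' j - c' k0) := by
    refine Finset.sum_eq_single k0 (fun k _ hk => ?_) (by simp)
    have : (k0 : Fin n) ∈ Finset.univ.erase k := Finset.mem_erase.mpr ⟨Ne.symm hk, mem_univ _⟩
    rw [Finset.prod_eq_zero this hk0, zero_mul]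
  rw [hsum] at hsnd
  have h3 : a' j = c' k0 := by
    have := (mul_eq_zero.mp hsnd).resolve_left hprodne
    linear_combination this
  exact ⟨k0, by rw [ha, hc, hαγ, h3]⟩

/-- If two families of dual numbers over ℂ with pairwise distinct first coordinates have
the same lifted elementary symmetric expressions of every order `1 ≤ i ≤ n`, then they
coincide as sets. -/
theorem lifted_esymm_encode_finite_set {n : ℕ} (α a' γ c' : Fin n → ℂ)
    (hα : Function.Injective α) (hγ : Function.Injective γ)
    (a c : Fin n → DualNumber ℂ)
    (ha : ∀ j, a j = TrivSqZeroExt.inl (α j) + TrivSqZeroExt.inr (a' j))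
    (hc : ∀ j, c j = TrivSqZeroExt.inl (γ j) + TrivSqZeroExt.inr (c' j))
    (heq : ∀ i : ℕ, 1 ≤ i → i ≤ n →
      ∑ t ∈ (univ : Finset (Fin n)).powersetCard i, ∏ j ∈ t, a j =
        ∑ t ∈ (univ : Finset (Fin n)).powersetCard i, ∏ j ∈ t, c j) :
    Set.range a = Set.range c := by
  have hP : ∏ j, (X - C (a j)) = ∏ j, (X - C (c j)) := by
    have hm : ∀ f : Fin n → DualNumber ℂ, (∏ j, (X - C (f j))).natDegree = n := by
      intro f
      rw [natDegree_prod_of_monic _ _ fun i _ => monic_X_sub_C _]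
      simp
    refine Polynomial.ext fun k => ?_
    rcases le_or_gt k n with hk | hk
    · have e1 : ∀ f : Fin n → DualNumber ℂ, (∏ j, (X - C (f j))).coeff k
          = ∑ t ∈ (univ : Finset (Fin n)).powersetCard (n - k), ∏ i ∈ t, (-(f i)) := by
        intro f
        simp_rw [sub_eq_add_neg, ← C_neg]
        rw [Finset.prod_X_add_C_coeff _ _ (by simpa using hk)]
        simp
      rw [e1, e1]
      rcases Nat.eq_zero_or_pos (n - k) with h0 | h1
      · rw [h0]; simp [Finset.powersetCard_zero]
      · have key := heq (n - k) h1 (Nat.sub_le n k)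
        have e2 : ∀ f : Fin n → DualNumber ℂ,
            ∑ t ∈ (univ : Finset (Fin n)).powersetCard (n - k), ∏ i ∈ t, (-(f i))
              = (-1 : DualNumber ℂ) ^ (n - k) *
                ∑ t ∈ (univ : Finset (Fin n)).powersetCard (n - k), ∏ i ∈ t, f i := by
          intro f
          rw [Finset.mul_sum]
          refine Finset.sum_congr rfl fun t ht => ?_
          rw [Finset.mem_powersetCard_univ] at ht
          calc ∏ i ∈ t, (-(f i)) = ∏ i ∈ t, ((-1 : DualNumber ℂ) * f i) :=
                Finset.prod_congr rfl fun i _ => (neg_one_mul _).symm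
            _ = (-1 : DualNumber ℂ) ^ (n - k) * ∏ i ∈ t, f i := by
                rw [Finset.prod_mul_distrib, Finset.prod_const, ht]
        rw [e2, e2, key]
    · rw [coeff_eq_zero_of_natDegree_lt, coeff_eq_zero_of_natDegree_lt] <;>
        rw [hm] <;> exact hk
  exact Set.Subset.antisymm
    (dn_range_subset α a' γ c' hγ a c ha hc hP)
    (dn_range_subset γ c' α a' hα c a hc ha hP.symm)
end

section
/- Let r(X,Y) ∈ ℚ(X,Y) be a symmetric rational function (r(X,Y) = r(Y,X)) that is not of the form q₁·(X+Y) + q₀ with q₁, q₀ ∈ ℚ, and suppose that for each m ∈ ℕ, writing r(X, mX+Y) = ∑_{i=0}^{n} (P_{m,i}(X)/Q_{m,i}(X))·Yⁱ with P_{m,i}, Q_{m,i} coprime polynomials over ℚ, we have n ≥ 1 and P_{0,n} ≠ 0. If r is nonconstant, then there exists a natural number m and an index i > 0 such that deg P_{m,i} ≠ deg Q_{m,i}. -/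
open Finset

/-- The field ℚ(X,Y) of rational functions in two variables over ℚ. -/
abbrev QXY := FractionRing (MvPolynomial (Fin 2) ℚ)

/-- The image of `X` in ℚ(X,Y). -/
noncomputable def xx : QXY := algebraMap (MvPolynomial (Fin 2) ℚ) QXY (MvPolynomial.X 0)

/-- The image of `Y` in ℚ(X,Y). -/
noncomputable def yy : QXY := algebraMap (MvPolynomial (Fin 2) ℚ) QXY (MvPolynomial.X 1)

/-- Evaluation of a one-variable polynomial over ℚ at `X`, inside ℚ(X,Y). -/
noncomputable def evX (p : Polynomial ℚ) : QXY :=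
  algebraMap (MvPolynomial (Fin 2) ℚ) QXY (Polynomial.aeval (MvPolynomial.X 0) p)

/-- Evaluation of a one-variable polynomial over ℚ at `Y`, inside ℚ(X,Y). -/
noncomputable def evY (p : Polynomial ℚ) : QXY :=
  algebraMap (MvPolynomial (Fin 2) ℚ) QXY (Polynomial.aeval (MvPolynomial.X 1) p)

/-!
Suppose every coefficient of index `i > 0` is balanced, i.e. has `intDegree` zero as a rational
function of `X`. Embed `ℚ(X,Y)` into `ℚ(X)(Y)`, so that `r(X, mX+Y)` becomes a polynomial in `Y`
with coefficients `d_{m,i} ∈ ℚ(X)`.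

If `n ≥ 2`, Taylor expansion gives `d_{1,n-1} = d_{0,n-1} + n X d_{0,n}`, whose right-hand side has
degree `1` while the other terms have degree `0`.

If `n = 1`, clearing denominators in `d₀(X) + d₁(X) Y = d₀(Y) + d₁(Y) X` and comparing the two top
coefficients in `Y` puts `d₀` and `d₁` in `ℚ + ℚX`. Balance makes `d₁` constant, and then the
symmetry forces `r = q₁ (X + Y) + q₀`.
-/

open Polynomial

lemma RatFunc.intDegree_mk_eq_zero {K : Type*} [Field K] {p q : K[X]} (hq : q ≠ 0)
    (h : p.natDegree = q.natDegree) : (RatFunc.mk p q).intDegree = 0 := by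
  rcases eq_or_ne p 0 with rfl | hp
  · simp
  rw [RatFunc.mk_eq_div, RatFunc.intDegree_div (by simpa using hp) (by simpa using hq),
    RatFunc.intDegree_polynomial, RatFunc.intDegree_polynomial, h, sub_self]

lemma RatFunc.intDegree_sub_nonpos {K : Type*} [Field K] {x y : RatFunc K}
    (hx : x.intDegree ≤ 0) (hy : y.intDegree ≤ 0) : (x - y).intDegree ≤ 0 := by
  rcases eq_or_ne y 0 with rfl | hy0
  · simpa using hx
  rcases eq_or_ne (x - y) 0 with hxy | hxy
  · simp [hxy]
  rw [sub_eq_add_neg] at hxy ⊢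
  calc (x + -y).intDegree ≤ max x.intDegree (-y).intDegree :=
        RatFunc.intDegree_add_le (neg_ne_zero.mpr hy0) hxy
    _ ≤ 0 := by simpa using ⟨hx, hy⟩

lemma Polynomial.coeff_taylor_of_natDegree_le {R : Type*} [CommSemiring R] {p : R[X]} {N : ℕ}
    (hp : p.natDegree ≤ N + 1) (r : R) :
    (taylor r p).coeff N = p.coeff N + (N + 1) * r * p.coeff (N + 1) := by
  rw [taylor_apply, comp_eq_sum_left, sum_over_range' _ (by simp) (N + 2) (by omega),
    finsetSum_coeff, sum_range_succ, sum_range_succ, sum_eq_zero]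
  · simp [coeff_X_add_C_pow]
    ring
  · intro i hi
    rw [coeff_C_mul, coeff_X_add_C_pow, Nat.choose_eq_zero_of_lt (mem_range.mp hi)]
    simp

lemma RatFunc.intDegree_coeff_taylor_X_pos {K : Type*} [Field K] [CharZero K]
    {p : (RatFunc K)[X]} {N : ℕ} (hp : p.natDegree ≤ N + 1) (hlead : p.coeff (N + 1) ≠ 0)
    (hlead' : (p.coeff (N + 1)).intDegree = 0) (hsub : (p.coeff N).intDegree ≤ 0) :
    0 < ((taylor RatFunc.X p).coeff N).intDegree := by
  by_contra! h
  have hN : ((N : RatFunc K) + 1) ≠ 0 := by exact_mod_cast N.succ_ne_zero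
  have hN' : ((N : RatFunc K) + 1).intDegree = 0 := by
    simpa using RatFunc.intDegree_C (N + 1 : K)
  have key := RatFunc.intDegree_sub_nonpos h hsub
  rw [coeff_taylor_of_natDegree_le hp, add_sub_cancel_left,
    RatFunc.intDegree_mul (mul_ne_zero hN RatFunc.X_ne_zero) hlead,
    RatFunc.intDegree_mul hN RatFunc.X_ne_zero, hN', hlead', RatFunc.intDegree_X] at key
  omega

lemma intDegree_ratCast_add_mul_X {a b : ℚ} (hb : b ≠ 0) :
    ((a : RatFunc ℚ) + b * RatFunc.X (K := ℚ)).intDegree = 1 := by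
  have h : (a : RatFunc ℚ) + b * RatFunc.X (K := ℚ) = algebraMap ℚ[X] _ (C b * X + C a) := by
    rw [map_add, map_mul, RatFunc.algebraMap_C, RatFunc.algebraMap_C, RatFunc.algebraMap_X,
      eq_ratCast, eq_ratCast, add_comm]
  rw [h, RatFunc.intDegree_polynomial, natDegree_linear hb, Nat.cast_one]

lemma Submodule.mem_of_C_add_C_mul_X_mul_map_eq {k K : Type*} [Field k] [Field K] [Algebra k K]
    {V : Submodule k K} {c e : K} {D : k[X]} (hD : D ≠ 0) {E : K[X]} (hE : ∀ i, E.coeff i ∈ V)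
    (h : (C c + C e * X) * D.map (algebraMap k K) = E) : c ∈ V ∧ e ∈ V := by
  have hcoeff : ∀ i, D.coeff i • c + (X * D).coeff i • e ∈ V := by
    intro i
    convert hE i using 1
    rw [← h, add_mul, mul_assoc, ← Polynomial.map_X (algebraMap k K), ← Polynomial.map_mul,
      coeff_add, coeff_C_mul, coeff_C_mul, coeff_map, coeff_map, Algebra.smul_def,
      Algebra.smul_def, mul_comm, mul_comm (algebraMap k K _)]
  have hlead : D.coeff D.natDegree ≠ 0 := leadingCoeff_ne_zero.mpr hD
  have he : e ∈ V := by
    have := hcoeff (D.natDegree + 1)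
    rwa [coeff_eq_zero_of_natDegree_lt (Nat.lt_succ_self _), zero_smul, zero_add, coeff_X_mul,
      Submodule.smul_mem_iff _ hlead] at this
  refine ⟨?_, he⟩
  have := hcoeff D.natDegree
  rwa [Submodule.add_mem_iff_left _ (V.smul_mem _ he), Submodule.smul_mem_iff _ hlead] at this

noncomputable def biPolyEquiv : MvPolynomial (Fin 2) ℚ ≃ₐ[ℚ] ℚ[X][X] :=
  (MvPolynomial.renameEquiv ℚ (Equiv.swap 0 1)).trans
    ((MvPolynomial.finSuccEquiv ℚ 1).trans
      (Polynomial.mapAlgEquiv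
        ((MvPolynomial.finSuccEquiv ℚ 0).trans
          (Polynomial.mapAlgEquiv (MvPolynomial.isEmptyAlgEquiv ℚ (Fin 0))))))

lemma biPolyEquiv_X_zero : biPolyEquiv (MvPolynomial.X 0) = C X := by
  have h : (MvPolynomial.X 1 : MvPolynomial (Fin 2) ℚ) = MvPolynomial.X (Fin.succ 0) := rfl
  simp [biPolyEquiv, h, MvPolynomial.finSuccEquiv_X_succ, MvPolynomial.finSuccEquiv_X_zero]

lemma biPolyEquiv_X_one : biPolyEquiv (MvPolynomial.X 1) = X := by
  simp only [biPolyEquiv, AlgEquiv.trans_apply, MvPolynomial.renameEquiv_apply,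
    MvPolynomial.rename_X, Equiv.swap_apply_right, MvPolynomial.finSuccEquiv_X_zero]
  simp

noncomputable def embedPoly : MvPolynomial (Fin 2) ℚ →ₐ[ℚ] RatFunc (RatFunc ℚ) :=
  MvPolynomial.aeval ![RatFunc.C RatFunc.X, RatFunc.X]

lemma embedPoly_injective : Function.Injective embedPoly := by
  have h : (embedPoly : MvPolynomial (Fin 2) ℚ →+* RatFunc (RatFunc ℚ)) =
      ((algebraMap (RatFunc ℚ)[X] (RatFunc (RatFunc ℚ))).comp
        (mapRingHom (algebraMap ℚ[X] (RatFunc ℚ)))).comp (biPolyEquiv : _ →+* _) := by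
    refine MvPolynomial.ringHom_ext' (Subsingleton.elim _ _) fun i => ?_
    fin_cases i
    · simp [embedPoly, biPolyEquiv_X_zero]
    · simp [embedPoly, biPolyEquiv_X_one]
  change Function.Injective (embedPoly : MvPolynomial (Fin 2) ℚ →+* RatFunc (RatFunc ℚ))
  rw [h, RingHom.coe_comp, RingHom.coe_comp]
  exact ((IsFractionRing.injective _ _).comp
    (Polynomial.map_injective _ (IsFractionRing.injective _ _))).comp biPolyEquiv.injective

noncomputable def toIterRatFunc : QXY →+* RatFunc (RatFunc ℚ) :=
  IsFractionRing.lift embedPoly_injective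

lemma toIterRatFunc_algebraMap (p : MvPolynomial (Fin 2) ℚ) :
    toIterRatFunc (algebraMap _ QXY p) = embedPoly p :=
  IsFractionRing.lift_algebraMap embedPoly_injective p

lemma toIterRatFunc_xx : toIterRatFunc xx = RatFunc.C (K := RatFunc ℚ) RatFunc.X := by
  simp [xx, toIterRatFunc_algebraMap, embedPoly]

lemma toIterRatFunc_yy : toIterRatFunc yy = RatFunc.X := by
  simp [yy, toIterRatFunc_algebraMap, embedPoly]

lemma toIterRatFunc_evX (p : ℚ[X]) :
    toIterRatFunc (evX p) = RatFunc.C (algebraMap ℚ[X] (RatFunc ℚ) p) :=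
  RingHom.congr_fun (f := (toIterRatFunc.comp (algebraMap _ QXY)).comp
      (aeval (MvPolynomial.X 0)).toRingHom) (g := RatFunc.C.comp (algebraMap ℚ[X] (RatFunc ℚ)))
    (ringHom_ext' (Subsingleton.elim _ _) (by simp [toIterRatFunc_algebraMap, embedPoly])) p

lemma toIterRatFunc_evY (p : ℚ[X]) :
    toIterRatFunc (evY p) = algebraMap (RatFunc ℚ)[X] _ (p.map (algebraMap ℚ (RatFunc ℚ))) :=
  RingHom.congr_fun (f := (toIterRatFunc.comp (algebraMap _ QXY)).comp
      (aeval (MvPolynomial.X 1)).toRingHom)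
    (g := (algebraMap (RatFunc ℚ)[X] _).comp (mapRingHom (algebraMap ℚ (RatFunc ℚ))))
    (ringHom_ext' (Subsingleton.elim _ _) (by simp [toIterRatFunc_algebraMap, embedPoly])) p

noncomputable def swapXY : QXY ≃+* QXY :=
  IsFractionRing.ringEquivOfRingEquiv
    (MvPolynomial.renameEquiv ℚ (Equiv.swap (0 : Fin 2) 1)).toRingEquiv

lemma swapXY_xx : swapXY xx = yy := by
  simp [swapXY, xx, yy]

lemma swapXY_evX (p : ℚ[X]) : swapXY (evX p) = evY p := by
  simp [swapXY, evX, evY, ← Polynomial.aeval_algHom_apply]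

lemma toIterRatFunc_evX_div (P Q : ℚ[X]) :
    toIterRatFunc (evX P / evX Q) = RatFunc.C (RatFunc.mk P Q) := by
  rw [map_div₀, toIterRatFunc_evX, toIterRatFunc_evX, RatFunc.mk_eq_div, map_div₀]

lemma toIterRatFunc_evY_div (P Q : ℚ[X]) : toIterRatFunc (evY P / evY Q) =
    RatFunc.mk (P.map (algebraMap ℚ (RatFunc ℚ))) (Q.map (algebraMap ℚ (RatFunc ℚ))) := by
  rw [map_div₀, toIterRatFunc_evY, toIterRatFunc_evY, RatFunc.mk_eq_div]

lemma mem_span_one_X_of_C_add_C_mul_X_eq {c e : RatFunc ℚ} {P₀ Q₀ P₁ Q₁ : ℚ[X]}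
    (hQ₀ : Q₀ ≠ 0) (hQ₁ : Q₁ ≠ 0)
    (h : RatFunc.C c + RatFunc.C e * RatFunc.X =
      RatFunc.mk (P₀.map (algebraMap ℚ (RatFunc ℚ))) (Q₀.map (algebraMap ℚ (RatFunc ℚ))) +
        RatFunc.mk (P₁.map (algebraMap ℚ (RatFunc ℚ))) (Q₁.map (algebraMap ℚ (RatFunc ℚ))) *
          RatFunc.C (K := RatFunc ℚ) RatFunc.X) :
    c ∈ Submodule.span ℚ {1, RatFunc.X} ∧ e ∈ Submodule.span ℚ {1, RatFunc.X} := by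
  have hne : ∀ {Q : ℚ[X]}, Q ≠ 0 →
      algebraMap _ (RatFunc (RatFunc ℚ)) (Q.map (algebraMap ℚ (RatFunc ℚ))) ≠ 0 := fun hQ =>
    (map_ne_zero_iff _ (IsFractionRing.injective _ _)).mpr
      ((Polynomial.map_ne_zero_iff (algebraMap ℚ (RatFunc ℚ)).injective).mpr hQ)
  have hpoly : (C c + C e * X) * (Q₀ * Q₁).map (algebraMap ℚ (RatFunc ℚ)) =
      (P₀ * Q₁).map (algebraMap ℚ (RatFunc ℚ)) +
        (P₁ * Q₀).map (algebraMap ℚ (RatFunc ℚ)) * C RatFunc.X := by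
    apply IsFractionRing.injective _ (RatFunc (RatFunc ℚ))
    simp only [map_mul, map_add, Polynomial.map_mul, RatFunc.algebraMap_C, RatFunc.algebraMap_X,
      h, RatFunc.mk_eq_div]
    field_simp [hne hQ₀, hne hQ₁]
  refine Submodule.mem_of_C_add_C_mul_X_mul_map_eq (mul_ne_zero hQ₀ hQ₁) (fun i => ?_) hpoly
  refine Submodule.mem_span_pair.mpr ⟨(P₀ * Q₁).coeff i, (P₁ * Q₀).coeff i, ?_⟩
  rw [coeff_add, coeff_mul_C, coeff_map, coeff_map, Algebra.smul_def, Algebra.smul_def, mul_one]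

lemma evX_div_evX_eq_of_mk_eq {P Q : ℚ[X]} {a b : ℚ}
    (h : RatFunc.mk P Q = a + b * RatFunc.X (K := ℚ)) : evX P / evX Q = a + b * xx := by
  apply toIterRatFunc.injective
  rw [toIterRatFunc_evX_div, h]
  simp [toIterRatFunc_xx]

lemma evY_div_evY_eq_of_mk_eq {P Q : ℚ[X]} {a b : ℚ}
    (h : RatFunc.mk P Q = a + b * RatFunc.X (K := ℚ)) : evY P / evY Q = a + b * yy := by
  simpa [← swapXY_evX, ← swapXY_xx] using congrArg swapXY (evX_div_evX_eq_of_mk_eq h)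

lemma xx_ne_yy : xx ≠ yy := fun h => by
  simpa [toIterRatFunc_xx, toIterRatFunc_yy] using congrArg (RatFunc.intDegree ∘ toIterRatFunc) h

lemma exists_eq_linear_of_symm {P₀ Q₀ P₁ Q₁ : ℚ[X]} (hQ₀ : Q₀ ≠ 0) (hQ₁ : Q₁ ≠ 0)
    (hbal : P₁.natDegree = Q₁.natDegree)
    (hsymm : evX P₀ / evX Q₀ + evX P₁ / evX Q₁ * yy =
      evY P₀ / evY Q₀ + evY P₁ / evY Q₁ * xx) :
    ∃ q₁ q₀ : ℚ, evX P₀ / evX Q₀ + evX P₁ / evX Q₁ * yy =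
      algebraMap ℚ QXY q₁ * (xx + yy) + algebraMap ℚ QXY q₀ := by
  have h := congrArg toIterRatFunc hsymm
  simp only [map_add, map_mul, toIterRatFunc_evX_div, toIterRatFunc_evY_div, toIterRatFunc_xx,
    toIterRatFunc_yy] at h
  obtain ⟨h₀, h₁⟩ := mem_span_one_X_of_C_add_C_mul_X_eq hQ₀ hQ₁ h
  obtain ⟨α, β, hαβ⟩ := Submodule.mem_span_pair.mp h₀
  obtain ⟨δ, ε, hδε⟩ := Submodule.mem_span_pair.mp h₁
  simp only [Rat.smul_def, mul_one] at hαβ hδε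
  obtain rfl : ε = 0 := by
    by_contra hε
    have hdeg := RatFunc.intDegree_mk_eq_zero hQ₁ hbal
    rw [← hδε, intDegree_ratCast_add_mul_X hε] at hdeg
    exact one_ne_zero hdeg
  rw [evX_div_evX_eq_of_mk_eq hαβ.symm, evX_div_evX_eq_of_mk_eq hδε.symm] at hsymm ⊢
  rw [evY_div_evY_eq_of_mk_eq hαβ.symm, evY_div_evY_eq_of_mk_eq hδε.symm] at hsymm
  simp only [Rat.cast_zero, zero_mul, add_zero] at hsymm ⊢
  have hβδ : ((β - δ : ℚ) : QXY) * (xx - yy) = 0 := by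
    push_cast
    linear_combination hsymm
  obtain rfl : β = δ := by
    simpa [sub_eq_zero, xx_ne_yy] using hβδ
  exact ⟨β, α, by simp only [eq_ratCast]; ring⟩

noncomputable def expansionInY (P Q : ℕ → ℚ[X]) (n : ℕ) : (RatFunc ℚ)[X] :=
  ∑ i ∈ range (n + 1), C (RatFunc.mk (P i) (Q i)) * X ^ i

lemma coeff_expansionInY (P Q : ℕ → ℚ[X]) {n i : ℕ} (hi : i ≤ n) :
    (expansionInY P Q n).coeff i = RatFunc.mk (P i) (Q i) := by
  simp [expansionInY, finsetSum_coeff, Nat.lt_succ_of_le hi]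

lemma natDegree_expansionInY_le (P Q : ℕ → ℚ[X]) (n : ℕ) : (expansionInY P Q n).natDegree ≤ n :=
  natDegree_sum_le_of_forall_le _ _ fun _ hi =>
    (natDegree_C_mul_X_pow_le _ _).trans (Nat.lt_succ_iff.mp (mem_range.mp hi))

lemma toIterRatFunc_sum (P Q : ℕ → ℚ[X]) (n : ℕ) (z : QXY) :
    toIterRatFunc (∑ i ∈ range (n + 1), evX (P i) / evX (Q i) * z ^ i) =
      aeval (toIterRatFunc z) (expansionInY P Q n) := by
  rw [expansionInY, map_sum, map_sum]
  refine sum_congr rfl fun i _ => ?_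
  rw [map_mul, map_pow, toIterRatFunc_evX_div, map_mul, map_pow, aeval_C, aeval_X,
    RatFunc.algebraMap_eq_C]

lemma taylor_expansionInY {P₀ Q₀ P₁ Q₁ : ℕ → ℚ[X]} {n : ℕ}
    (h : ∑ i ∈ range (n + 1), evX (P₁ i) / evX (Q₁ i) * yy ^ i =
      ∑ i ∈ range (n + 1), evX (P₀ i) / evX (Q₀ i) * (xx + yy) ^ i) :
    taylor RatFunc.X (expansionInY P₀ Q₀ n) = expansionInY P₁ Q₁ n := by
  apply IsFractionRing.injective _ (RatFunc (RatFunc ℚ))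
  have := congrArg toIterRatFunc h
  rw [toIterRatFunc_sum, toIterRatFunc_sum, map_add, toIterRatFunc_xx, toIterRatFunc_yy] at this
  rw [← RatFunc.aeval_X_left_eq_algebraMap, ← RatFunc.aeval_X_left_eq_algebraMap, this,
    taylor_apply, aeval_comp]
  simp [add_comm]

theorem exists_unbalanced_coefficient_general (n : ℕ) (P Q : ℕ → ℕ → Polynomial ℚ)
    (hn : 1 ≤ n)
    (hcop : ∀ m i, i ≤ n → IsCoprime (P m i) (Q m i) ∧ Q m i ≠ 0)
    (htop : P 0 n ≠ 0)
    (hsymm : ∑ i ∈ range (n + 1), evX (P 0 i) / evX (Q 0 i) * yy ^ i =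
      ∑ i ∈ range (n + 1), evY (P 0 i) / evY (Q 0 i) * xx ^ i)
    (hexp : ∀ m : ℕ, ∑ i ∈ range (n + 1), evX (P m i) / evX (Q m i) * yy ^ i =
      ∑ i ∈ range (n + 1), evX (P 0 i) / evX (Q 0 i) * ((m : QXY) * xx + yy) ^ i)
    (hnotlin : ¬ ∃ q₁ q₀ : ℚ,
      ∑ i ∈ range (n + 1), evX (P 0 i) / evX (Q 0 i) * yy ^ i =
        algebraMap ℚ QXY q₁ * (xx + yy) + algebraMap ℚ QXY q₀) :
    ∃ m i, 0 < i ∧ i ≤ n ∧ (P m i).natDegree ≠ (Q m i).natDegree := by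
  by_contra! hbal
  obtain rfl | ⟨N, rfl⟩ : n = 1 ∨ ∃ N, n = N + 2 := by
    rcases Nat.exists_eq_add_of_le' hn with ⟨_ | N, rfl⟩ <;> simp
  · refine hnotlin ?_
    simp only [sum_range_succ, sum_range_zero, zero_add, pow_zero, mul_one, pow_one] at hsymm ⊢
    exact exists_eq_linear_of_symm (hcop 0 0 zero_le_one).2 (hcop 0 1 le_rfl).2
      (hbal 0 1 one_pos le_rfl) hsymm
  · have hdeg : ∀ m i, 0 < i → i ≤ N + 2 → (RatFunc.mk (P m i) (Q m i)).intDegree = 0 :=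
      fun m i hi hin => RatFunc.intDegree_mk_eq_zero (hcop m i hin).2 (hbal m i hi hin)
    have hshift := taylor_expansionInY (by simpa using hexp 1)
    have hpos := RatFunc.intDegree_coeff_taylor_X_pos (N := N + 1)
      (natDegree_expansionInY_le (P 0) (Q 0) (N + 2))
      (by rw [coeff_expansionInY _ _ le_rfl, RatFunc.mk_eq_div]
          exact div_ne_zero (by simpa using htop) (by simpa using (hcop 0 _ le_rfl).2))
      (by rw [coeff_expansionInY _ _ le_rfl, hdeg 0 _ (by omega) le_rfl])
      (by rw [coeff_expansionInY _ _ (by omega), hdeg 0 _ (by omega) (by omega)])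
    rw [hshift, coeff_expansionInY _ _ (by omega), hdeg 1 _ (by omega) (by omega)] at hpos
    exact lt_irrefl 0 hpos

/-- Let `r(X,Y) = ∑_{i≤n} (P_{0,i}(X)/Q_{0,i}(X)) Yⁱ` be a symmetric rational function,
not of the form `q₁(X+Y) + q₀` (in particular nonconstant), and suppose for each `m`
the expansion of `r(X, mX+Y)` in powers of `Y` has coefficients `P_{m,i}/Q_{m,i}` in
lowest terms, with `n ≥ 1` and `P_{0,n} ≠ 0`. Then some coefficient with `i > 0` has
numerator and denominator of different degrees. -/
theorem exists_unbalanced_coefficient (n : ℕ) (P Q : ℕ → ℕ → Polynomial ℚ)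
    (hn : 1 ≤ n)
    (hcop : ∀ m i, i ≤ n → IsCoprime (P m i) (Q m i) ∧ Q m i ≠ 0)
    (htop : P 0 n ≠ 0)
    (hsymm : ∑ i ∈ range (n + 1), evX (P 0 i) / evX (Q 0 i) * yy ^ i =
      ∑ i ∈ range (n + 1), evY (P 0 i) / evY (Q 0 i) * xx ^ i)
    (hexp : ∀ m : ℕ, ∑ i ∈ range (n + 1), evX (P m i) / evX (Q m i) * yy ^ i =
      ∑ i ∈ range (n + 1), evX (P 0 i) / evX (Q 0 i) * ((m : QXY) * xx + yy) ^ i)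
    (hnotlin : ¬ ∃ q₁ q₀ : ℚ,
      ∑ i ∈ range (n + 1), evX (P 0 i) / evX (Q 0 i) * yy ^ i =
        algebraMap ℚ QXY q₁ * (xx + yy) + algebraMap ℚ QXY q₀)
    (hnonconst : ¬ ∃ q : ℚ,
      ∑ i ∈ range (n + 1), evX (P 0 i) / evX (Q 0 i) * yy ^ i = algebraMap ℚ QXY q) :
    ∃ m i, 0 < i ∧ i ≤ n ∧ (P m i).natDegree ≠ (Q m i).natDegree :=
  exists_unbalanced_coefficient_general n P Q hn hcop htop hsymm hexp hnotlin
end
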